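/- arXiv:1212.2178 — 4 statements merged into one kernel-verified Lean document; each statement's English description precedes it below -/
import Mathlib

section
/- Let G = (V, E) be a finite undirected graph admitting a strongly connected orientation. Then every strongly connected orientation of G has maximum indegree at least max over nonempty U ⊆ V of ⌈(m(U) + c(U)) / |U|⌉, where m(U) is the number of edges of G with both endpoints in U and c(U) is the number of connected components of the induced subgraph G[V ∖ U]. -/
/-- An orientation of an undirected simple graph `G`: each edge is assigned
exactly one direction, giving the arc relation `arc`. -/
structure GraphOrientation {V : Type*} (G : SimpleGraph V) where
  arc : V → V → Prop
  adj_iff : ∀ u v, G.Adj u v ↔ (arc u v ∨ arc v u)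
  asymm : ∀ u v, arc u v → ¬ arc v u

/-- The indegree of a vertex in an orientation. -/
noncomputable def indeg {V : Type*} {G : SimpleGraph V} (D : GraphOrientation G) (v : V) : ℕ :=
  {u | D.arc u v}.ncard

/-- The list of consecutive arcs of a path given as a list of vertices. -/
def pathArcs {V : Type*} (p : List V) : List (V × V) := p.zip p.tail

/-- The list of arcs of a cycle given as a list of (distinct) vertices,
including the closing arc from the last vertex back to the first. -/
def cycleArcs {V : Type*} (p : List V) : List (V × V) := p.zip (p.rotate 1)

/-- `p` is a (simple) directed path from `u` to `v` with respect to the arc relation `A`. -/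
def IsDipath {V : Type*} (A : V → V → Prop) (p : List V) (u v : V) : Prop :=
  p.head? = some u ∧ p.getLast? = some v ∧ p.Nodup ∧ p.Chain' A

/-- `D'` is obtained from `D` by reversing exactly the arcs in the list `A`
(all of which must be arcs of `D`). -/
def ReversalAlong {V : Type*} {G : SimpleGraph V} (D D' : GraphOrientation G)
    (A : List (V × V)) : Prop :=
  (∀ a ∈ A, D.arc a.1 a.2) ∧ ∀ u v, D'.arc u v ↔ ((D.arc u v ∧ (u, v) ∉ A) ∨ (v, u) ∈ A)

/-- `D'` is obtained from `D` by reversing every arc of some directed cycle. -/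
def CycleReversal {V : Type*} {G : SimpleGraph V} (D D' : GraphOrientation G) : Prop :=
  ∃ p : List V, p ≠ [] ∧ p.Nodup ∧ ReversalAlong D D' (cycleArcs p)

/-- `D'` is obtained from `D` by a weak reversal: reversing a directed path
from `u` to `v` where `δ(u) = δ(v) - 1`. -/
def WeakReversal {V : Type*} {G : SimpleGraph V} (D D' : GraphOrientation G) : Prop :=
  ∃ (p : List V) (u v : V), IsDipath D.arc p u v ∧ indeg D u + 1 = indeg D v ∧
    ReversalAlong D D' (pathArcs p)

/-- `D` contains no reversible path, i.e. no directed path from `u` to `v`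
with `δ(u) < δ(v) - 1`. -/
def NoReversiblePath {V : Type*} {G : SimpleGraph V} (D : GraphOrientation G) : Prop :=
  ∀ u v : V, Relation.ReflTransGen D.arc u v → indeg D v ≤ indeg D u + 1

/-- The indegree sequence of an orientation, sorted in decreasing order. -/
noncomputable def degSeq {V : Type*} [Fintype V] {G : SimpleGraph V}
    (D : GraphOrientation G) : List ℕ :=
  ((Finset.univ.val.map (indeg D)).sort (· ≤ ·)).reverse

/-- Lexicographic (non-strict) comparison of lists of naturals. -/
def lexLE (l₁ l₂ : List ℕ) : Prop := l₁ = l₂ ∨ List.Lex (· < ·) l₁ l₂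

/-- `u` two-reaches `v`: there are two arc-disjoint directed paths from `u` to `v`. -/
def TwoReaches {V : Type*} (A : V → V → Prop) (u v : V) : Prop :=
  ∃ p q : List V, IsDipath A p u v ∧ IsDipath A q u v ∧ ∀ a ∈ pathArcs p, a ∉ pathArcs q

/-- Reachability inside the induced subgraph `G[U]`. -/
def ReachIn {V : Type*} (G : SimpleGraph V) (U : Set V) (x y : V) : Prop :=
  Relation.ReflTransGen (fun a b => a ∈ U ∧ b ∈ U ∧ G.Adj a b) x y

/-- `C` is a connected component of the induced undirected subgraph `G[U]`. -/
def IsCompOf {V : Type*} (G : SimpleGraph V) (U C : Set V) : Prop :=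
  ∃ x ∈ U, C = {y | ReachIn G U x y}

/-- `m(U)`: the number of edges of `G` with both endpoints in `U`. -/
noncomputable def edgesIn {V : Type*} (G : SimpleGraph V) (U : Finset V) : ℕ :=
  {e : Sym2 V | e ∈ G.edgeSet ∧ ∀ x ∈ e, x ∈ U}.ncard

/-- `c(U)`: the number of connected components of the induced subgraph `G[V ∖ U]`. -/
noncomputable def compCount {V : Type*} (G : SimpleGraph V) (U : Finset V) : ℕ :=
  Nat.card ((G.induce ((↑U : Set V)ᶜ)).ConnectedComponent)

/-!
Summing indegrees over `U` counts the arcs with head in `U`. Those with tail in `U` cover the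
`m(U)` edges inside `U`; by strong connectivity, every component of `G[V ∖ U]` has a directed
path into `U` and hence sends an arc into `U`. So `m(U) + c(U) ≤ ∑_{v ∈ U} δ(v) ≤ |U| Δ`.
-/

namespace GraphOrientation

variable {V : Type*} {G : SimpleGraph V} (D : GraphOrientation G)

lemma exists_arc_into_of_reflTransGen {S : Set V} {x y : V}
    (h : Relation.ReflTransGen D.arc x y) (hx : x ∉ S) (hy : y ∈ S) :
    ∃ w u, D.arc w u ∧ u ∈ S ∧
      ∃ hw : w ∉ S, (G.induce Sᶜ).Reachable ⟨x, hx⟩ ⟨w, hw⟩ := by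
  induction h using Relation.ReflTransGen.head_induction_on with
  | refl => exact absurd hy hx
  | @head a b hab _ ih =>
    by_cases hb : b ∈ S
    · exact ⟨a, b, hab, hb, hx, .refl _⟩
    · obtain ⟨w, u, hwu, hu, hw, hreach⟩ := ih hb
      have hadj : (G.induce Sᶜ).Adj ⟨a, hx⟩ ⟨b, hb⟩ := (D.adj_iff a b).2 (.inl hab)
      exact ⟨w, u, hwu, hu, hw, hadj.reachable.trans hreach⟩

variable [Finite V]

lemma ncard_arcs_into_eq_sum_indeg (U : Finset V) :
    {p : V × V | D.arc p.1 p.2 ∧ p.2 ∈ U}.ncard = ∑ v ∈ U, indeg D v := by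
  classical
  have := Fintype.ofFinite V
  have hset : {p : V × V | D.arc p.1 p.2 ∧ p.2 ∈ U} =
      ↑((Finset.univ ×ˢ U).filter fun p => D.arc p.1 p.2) := by
    ext p
    simp [and_comm]
  have hindeg : ∀ v, indeg D v = (Finset.univ.filter fun u => D.arc u v).card := fun v => by
    rw [indeg, ← Set.ncard_coe_finset, Finset.coe_filter_univ]
  simp only [hset, Set.ncard_coe_finset, Finset.card_filter, Finset.sum_product_right, hindeg]

lemma edgesIn_le_ncard_arcs_within (U : Finset V) :
    edgesIn G U ≤ {p : V × V | D.arc p.1 p.2 ∧ p.1 ∈ U ∧ p.2 ∈ U}.ncard := by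
  let A := {p : V × V | D.arc p.1 p.2 ∧ p.1 ∈ U ∧ p.2 ∈ U}
  suffices h :
      {e : Sym2 V | e ∈ G.edgeSet ∧ ∀ x ∈ e, x ∈ U} ⊆ Function.uncurry Sym2.mk '' A from
    (Set.ncard_le_ncard h (Set.toFinite _)).trans (Set.ncard_image_le (Set.toFinite A))
  rintro e ⟨he, hU⟩
  induction e using Sym2.inductionOn with
  | hf x y =>
    have hx : x ∈ U := hU x (Sym2.mem_mk_left x y)
    have hy : y ∈ U := hU y (Sym2.mem_mk_right x y)
    rcases (D.adj_iff x y).1 he with hxy | hyx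
    · exact ⟨(x, y), ⟨hxy, hx, hy⟩, rfl⟩
    · exact ⟨(y, x), ⟨hyx, hy, hx⟩, Sym2.eq_swap⟩

lemma compCount_le_ncard_arcs_entering (hsc : ∀ u v, Relation.ReflTransGen D.arc u v)
    {U : Finset V} (hU : U.Nonempty) :
    compCount G U ≤ {p : V × V | D.arc p.1 p.2 ∧ p.1 ∉ U ∧ p.2 ∈ U}.ncard := by
  obtain ⟨u₀, hu₀⟩ := hU
  let tailComponent (p : {p : V × V | D.arc p.1 p.2 ∧ p.1 ∉ U ∧ p.2 ∈ U}) :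
      (G.induce (↑U : Set V)ᶜ).ConnectedComponent :=
    (G.induce _).connectedComponentMk ⟨p.1.1, p.2.2.1⟩
  have hsurj : Function.Surjective tailComponent := by
    rintro ⟨⟨x, hx⟩⟩
    obtain ⟨w, u, hwu, hu, hw, hreach⟩ :=
      D.exists_arc_into_of_reflTransGen (S := ↑U) (hsc x u₀) hx hu₀
    exact ⟨⟨(w, u), hwu, hw, hu⟩, SimpleGraph.ConnectedComponent.sound hreach.symm⟩
  rw [compCount, ← Nat.card_coe_set_eq]
  exact Nat.card_le_card_of_surjective _ hsurj

theorem edgesIn_add_compCount_le_sum_indeg (hsc : ∀ u v, Relation.ReflTransGen D.arc u v)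
    {U : Finset V} (hU : U.Nonempty) :
    edgesIn G U + compCount G U ≤ ∑ v ∈ U, indeg D v := by
  let into := {p : V × V | D.arc p.1 p.2 ∧ p.2 ∈ U}
  let fromU := {p : V × V | p.1 ∈ U}
  have hwithin : into ∩ fromU = {p : V × V | D.arc p.1 p.2 ∧ p.1 ∈ U ∧ p.2 ∈ U} := by
    ext p
    simp only [into, fromU, Set.mem_inter_iff, Set.mem_ofPred_eq]
    tauto
  have hentering : into \ fromU = {p : V × V | D.arc p.1 p.2 ∧ p.1 ∉ U ∧ p.2 ∈ U} := by
    ext p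
    simp only [into, fromU, Set.mem_sdiff, Set.mem_ofPred_eq]
    tauto
  calc edgesIn G U + compCount G U ≤ (into ∩ fromU).ncard + (into \ fromU).ncard := by
        rw [hwithin, hentering]
        exact add_le_add (D.edgesIn_le_ncard_arcs_within U)
          (D.compCount_le_ncard_arcs_entering hsc hU)
    _ = into.ncard := Set.ncard_inter_add_ncard_sdiff_eq_ncard _ _ (Set.toFinite _)
    _ = ∑ v ∈ U, indeg D v := D.ncard_arcs_into_eq_sum_indeg U

end GraphOrientation

/-- Lower bound: any strongly connected orientation has maximum indegree at least
`max_{∅ ≠ U ⊆ V} ⌈(m(U) + c(U)) / |U|⌉`. -/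
theorem stmt_12 {V : Type*} [Fintype V] (G : SimpleGraph V) (D : GraphOrientation G)
    (hsc : ∀ u v : V, Relation.ReflTransGen D.arc u v) :
    (⨆ U : {U : Finset V // U.Nonempty},
        ⌈((edgesIn G U.1 + compCount G U.1 : ℚ)) / (U.1.card : ℚ)⌉₊)
      ≤ Finset.univ.sup (indeg D) := by
  refine ciSup_le' fun ⟨U, hU⟩ => ?_
  have hcount : edgesIn G U + compCount G U ≤ U.card * Finset.univ.sup (indeg D) :=
    (D.edgesIn_add_compCount_le_sum_indeg hsc hU).trans <|
      Finset.sum_le_card_nsmul U _ _ fun v _ => Finset.le_sup (Finset.mem_univ v)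
  rw [Nat.ceil_le, div_le_iff₀ (by exact_mod_cast hU.card_pos), mul_comm]
  exact_mod_cast hcount
end

section
/- Let G = (V, E) be a finite undirected graph that admits a strongly connected orientation. Then there exists a strongly connected orientation of G whose maximum indegree equals max over nonempty U ⊆ V of ⌈(m(U) + c(U)) / |U|⌉; consequently the minimum, over all strongly connected orientations of G, of the maximum indegree equals this quantity. -/
/-!
For the lower bound, the arcs of a strongly connected orientation with head in `U` are the
`m(U)` arcs inside `U` together with at least one arc entering `U` from each of the `c(U)`
components of `G - U`, so `|U| · Δ ≥ m(U) + c(U)` for the maximum indegree `Δ`.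

For the upper bound, take a strongly connected orientation `D` minimising the potential
`∑ v, (|V| + 1) ^ δ(v)`; it also minimises the maximum indegree `k`. Fix `v₀` with `δ(v₀) = k`
and let `W` be the set of vertices that reach `v₀` in `D` minus any single arc. For `u ∈ W`,
reversing a directed `u`–`v₀` path keeps `D` strongly connected and moves one unit of indegree
from `v₀` to `u`, so minimality forces `δ(u) ≥ k - 1`. A vertex outside `W` lies in the
"pocket" of an arc with head in `W` (the vertices that cannot reach `v₀` without that arc);
these pockets are disjoint and not adjacent, so each component of `G - W` sends exactly one
arc into `W`. Hence `|W| (k - 1) + 1 ≤ ∑_{u ∈ W} δ(u) ≤ m(W) + c(W)`.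
-/

open Relation

section Walks

variable {α : Type*} {R : α → α → Prop} {x y : α}

def avoiding (R : α → α → Prop) (f : α × α) (a b : α) : Prop := R a b ∧ (a, b) ≠ f

namespace Relation.ReflTransGen

lemma mem_of_closed {S : Set α} (hS : ∀ a b, R a b → a ∈ S → b ∈ S)
    (h : ReflTransGen R x y) (hx : x ∈ S) : y ∈ S := by
  induction h with
  | refl => exact hx
  | tail _ hab ih => exact hS _ _ hab ih

lemma exists_step_mem_not_mem {S : Set α} (h : ReflTransGen R x y) (hx : x ∈ S) (hy : y ∉ S) :
    ∃ a b, R a b ∧ a ∈ S ∧ b ∉ S := by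
  by_contra! hS
  exact hy (h.mem_of_closed hS hx)

lemma avoiding_or_snd_avoiding (h : ReflTransGen R x y) (f : α × α) :
    ReflTransGen (avoiding R f) x y ∨ ReflTransGen (avoiding R f) f.2 y := by
  induction h using ReflTransGen.head_induction_on with
  | refl => exact Or.inl .refl
  | @head a c hac _ ih =>
    rcases ih with ih | ih
    · by_cases hf : (a, c) = f
      · exact Or.inr (hf ▸ ih)
      · exact Or.inl (.head ⟨hac, hf⟩ ih)
    · exact Or.inr ih

lemma avoiding_or_exists_fst (h : ReflTransGen R x y) (F : Set (α × α)) :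
    ReflTransGen (fun a b => R a b ∧ (a, b) ∉ F) x y ∨
      ∃ f ∈ F, ReflTransGen (fun a b => R a b ∧ (a, b) ∉ F) x f.1 := by
  induction h using ReflTransGen.head_induction_on with
  | refl => exact Or.inl .refl
  | @head a c hac _ ih =>
    by_cases hF : (a, c) ∈ F
    · exact Or.inr ⟨(a, c), hF, .refl⟩
    · rcases ih with ih | ⟨f, hf, ih⟩
      · exact Or.inl (.head ⟨hac, hF⟩ ih)
      · exact Or.inr ⟨f, hf, .head ⟨hac, hF⟩ ih⟩

lemma exists_isDipath (h : ReflTransGen R x y) : ∃ p, IsDipath R p x y := by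
  induction h using ReflTransGen.head_induction_on with
  | refl => exact ⟨[y], rfl, rfl, List.nodup_singleton y, List.isChain_singleton y⟩
  | @head a c hac _ ih =>
    obtain ⟨p, hhead, hlast, hnd, hch⟩ := ih
    by_cases hap : a ∈ p
    · obtain ⟨s, t, rfl⟩ := List.append_of_mem hap
      refine ⟨a :: t, rfl, ?_, hnd.sublist (List.sublist_append_right s _),
        hch.suffix ⟨s, rfl⟩⟩
      rwa [List.getLast?_append_of_ne_nil _ (List.cons_ne_nil a t)] at hlast
    · obtain ⟨t, rfl⟩ := List.head?_eq_some_iff.1 hhead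
      refine ⟨a :: c :: t, rfl, ?_, List.nodup_cons.2 ⟨hap, hnd⟩,
        List.isChain_cons_cons.2 ⟨hac, hch⟩⟩
      rwa [List.getLast?_cons_cons]

end Relation.ReflTransGen

end Walks

section Paths

variable {α : Type*}

def PathStep (p : List α) (a b : α) : Prop := (a, b) ∈ pathArcs p

lemma pathStep_cons_cons {a b s t : α} {l : List α} :
    PathStep (a :: b :: l) s t ↔ (s = a ∧ t = b) ∨ PathStep (b :: l) s t := by
  simp [PathStep, pathArcs]

lemma pathStep_mono {a b : α} {l : List α} : PathStep (b :: l) ≤ PathStep (a :: b :: l) :=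
  fun _ _ h => pathStep_cons_cons.2 (Or.inr h)

lemma PathStep.mem {p : List α} {a b : α} (h : PathStep p a b) : a ∈ p ∧ b ∈ p :=
  ⟨(List.of_mem_zip h).1, List.mem_of_mem_tail (List.of_mem_zip h).2⟩

lemma PathStep.rel {R : α → α → Prop} : ∀ {p : List α}, p.IsChain R →
    ∀ {a b : α}, PathStep p a b → R a b
  | [], _, _, _, h | [_], _, _, _, h => by simp [PathStep, pathArcs] at h
  | _ :: _ :: _, hp, _, _, h => by
    rw [List.isChain_cons_cons] at hp
    rcases pathStep_cons_cons.1 h with ⟨rfl, rfl⟩ | h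
    · exact hp.1
    · exact PathStep.rel hp.2 h

lemma reflTransGen_pathStep_head : ∀ {a x : α} {l : List α}, x ∈ a :: l →
    ReflTransGen (PathStep (a :: l)) a x
  | _, _, [], hx => List.mem_singleton.1 hx ▸ .refl
  | a, x, b :: l, hx => by
    rcases List.mem_cons.1 hx with rfl | hx
    · exact .refl
    · exact .head (pathStep_cons_cons.2 (Or.inl ⟨rfl, rfl⟩))
        (ReflTransGen.mono pathStep_mono _ _ (reflTransGen_pathStep_head hx))

lemma reflTransGen_pathStep_of_getLast? : ∀ {p : List α} {v x : α}, p.getLast? = some v →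
    x ∈ p → ReflTransGen (PathStep p) x v
  | [], _, _, h, _ => by simp at h
  | [_], _, _, h, hx => by
    obtain rfl := List.mem_singleton.1 hx
    obtain rfl := Option.some.inj h
    exact .refl
  | a :: b :: l, v, x, h, hx => by
    rw [List.getLast?_cons_cons] at h
    have ih {y : α} (hy : y ∈ b :: l) : ReflTransGen (PathStep (a :: b :: l)) y v :=
      ReflTransGen.mono pathStep_mono _ _ (reflTransGen_pathStep_of_getLast? h hy)
    rcases List.mem_cons.1 hx with rfl | hx
    · exact .head (pathStep_cons_cons.2 (Or.inl ⟨rfl, rfl⟩)) (ih List.mem_cons_self)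
    · exact ih hx

lemma reflTransGen_pathStep_or_of_ne : ∀ {p : List α} {f g : α × α},
    f ∈ pathArcs p → g ∈ pathArcs p → f ≠ g →
      ReflTransGen (PathStep p) f.2 g.1 ∨ ReflTransGen (PathStep p) g.2 f.1
  | [], _, _, hf, _, _ | [_], _, _, hf, _, _ => by simp [pathArcs] at hf
  | a :: b :: l, f, g, hf, hg, hfg => by
    have lift {x y : α} (h : ReflTransGen (PathStep (b :: l)) x y) :
        ReflTransGen (PathStep (a :: b :: l)) x y := ReflTransGen.mono pathStep_mono _ _ h
    have head {e : α × α} (he : e ∈ pathArcs (b :: l)) :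
        ReflTransGen (PathStep (a :: b :: l)) b e.1 :=
      lift (reflTransGen_pathStep_head (PathStep.mem (p := b :: l) he).1)
    simp only [pathArcs, List.tail_cons, List.zip_cons_cons, List.mem_cons] at hf hg
    rcases hf with rfl | hf <;> rcases hg with rfl | hg
    · exact absurd rfl hfg
    · exact Or.inl (head hg)
    · exact Or.inr (head hf)
    · exact (reflTransGen_pathStep_or_of_ne hf hg hfg).imp lift lift

lemma ncard_pathStep_into_cons_cons [DecidableEq α] {a b z : α} {l : List α}
    (h : (a :: b :: l).Nodup) :
    {y | PathStep (a :: b :: l) y z}.ncard =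
      (if z = b then 1 else 0) + {y | PathStep (b :: l) y z}.ncard := by
  split_ifs with hz
  · subst hz
    have hz : z ∉ l := (List.nodup_cons.1 (List.nodup_cons.1 h).2).1
    have hl : {y | PathStep (z :: l) y z} = ∅ :=
      Set.eq_empty_of_forall_notMem fun y hy => hz (List.of_mem_zip hy).2
    have : {y | PathStep (a :: z :: l) y z} = {a} := by
      ext y
      simp only [pathStep_cons_cons, Set.mem_ofPred_eq, Set.mem_singleton_iff, and_true]
      exact or_iff_left fun hy => hz (List.of_mem_zip hy).2
    rw [this, hl, Set.ncard_singleton, Set.ncard_empty]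
  · simp [pathStep_cons_cons, hz]

lemma ncard_pathStep_from_cons_cons [DecidableEq α] {a b z : α} {l : List α}
    (h : (a :: b :: l).Nodup) :
    {y | PathStep (a :: b :: l) z y}.ncard =
      (if z = a then 1 else 0) + {y | PathStep (b :: l) z y}.ncard := by
  split_ifs with hz
  · subst hz
    have hz : z ∉ b :: l := (List.nodup_cons.1 h).1
    have hl : {y | PathStep (b :: l) z y} = ∅ :=
      Set.eq_empty_of_forall_notMem fun y hy => hz (PathStep.mem hy).1
    have : {y | PathStep (z :: b :: l) z y} = {b} := by
      ext y
      simp only [pathStep_cons_cons, Set.mem_ofPred_eq, Set.mem_singleton_iff, true_and]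
      exact or_iff_left fun hy => hz (PathStep.mem hy).1
    rw [this, hl, Set.ncard_singleton, Set.ncard_empty]
  · simp [pathStep_cons_cons, hz]

lemma ncard_pathStep_into_add [DecidableEq α] {R : α → α → Prop} :
    ∀ {p : List α} {u v : α}, IsDipath R p u v → ∀ z : α,
    {y | PathStep p y z}.ncard + (if z = u then 1 else 0) =
      {y | PathStep p z y}.ncard + (if z = v then 1 else 0)
  | [], _, _, h, _ => by simp [IsDipath] at h
  | [_], _, _, ⟨hu, hv, _⟩, _ => by
    simp only [List.head?_cons, List.getLast?_singleton, Option.some.injEq] at hu hv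
    subst hu hv
    simp [PathStep, pathArcs]
  | a :: b :: l, u, v, ⟨hu, hv, hnd, hch⟩, z => by
    obtain rfl : a = u := by simpa using hu
    have ih := ncard_pathStep_into_add (R := R) (u := b)
      ⟨rfl, by rwa [List.getLast?_cons_cons] at hv, hnd.of_cons, hch.tail⟩ z
    rw [ncard_pathStep_into_cons_cons hnd, ncard_pathStep_from_cons_cons hnd]
    split_ifs at ih ⊢ <;> omega

end Paths

section Reversal

variable {V : Type*} {G : SimpleGraph V} {D D' : GraphOrientation G}

def IsStrong (D : GraphOrientation G) : Prop := ∀ u v : V, ReflTransGen D.arc u v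

lemma GraphOrientation.exists_reversalAlong (D : GraphOrientation G) {A : List (V × V)}
    (hA : ∀ a ∈ A, D.arc a.1 a.2) : ∃ D', ReversalAlong D D' A := by
  refine ⟨{ arc := fun u v => (D.arc u v ∧ (u, v) ∉ A) ∨ (v, u) ∈ A
            adj_iff := fun u v => ?_
            asymm := fun u v => ?_ }, hA, fun _ _ => Iff.rfl⟩
  · have := hA (u, v); have := hA (v, u)
    rw [D.adj_iff]
    tauto
  · have := hA (u, v); have := hA (v, u); have := D.asymm u v; have := D.asymm v u
    tauto

lemma ReversalAlong.indeg_add_ncard [Finite V] {A : List (V × V)} (h : ReversalAlong D D' A)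
    (z : V) :
    indeg D' z + {y | (y, z) ∈ A}.ncard = indeg D z + {y | (z, y) ∈ A}.ncard := by
  set K := {y | D.arc y z ∧ (y, z) ∉ A}
  have hD' : {y | D'.arc y z} = K ∪ {y | (z, y) ∈ A} := by
    ext y; simp [K, h.2]
  have hD : {y | D.arc y z} = K ∪ {y | (y, z) ∈ A} := by
    ext y; have := h.1 (y, z); simp only [Set.mem_union, Set.mem_ofPred_eq, K]; tauto
  have hK' : Disjoint K {y | (z, y) ∈ A} :=
    Set.disjoint_left.2 fun y hy hzy => D.asymm _ _ hy.1 (h.1 _ hzy)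
  have hK : Disjoint K {y | (y, z) ∈ A} := Set.disjoint_left.2 fun y hy hyz => hy.2 hyz
  unfold indeg
  rw [hD', hD, Set.ncard_union_eq hK', Set.ncard_union_eq hK]
  omega

lemma ReversalAlong.indeg_add_of_isDipath [Finite V] [DecidableEq V] {p : List V} {u v : V}
    (h : ReversalAlong D D' (pathArcs p)) (hp : IsDipath D.arc p u v) (z : V) :
    indeg D' z + (if z = v then 1 else 0) = indeg D z + (if z = u then 1 else 0) := by
  have h₁ := h.indeg_add_ncard z
  have h₂ := ncard_pathStep_into_add hp z
  simp only [PathStep] at h₂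
  omega

/-- If the reversal left a cut with no outgoing arc, the path would cross that cut by a
single arc of `D`, and removing that arc would separate `u` from `v`. -/
lemma ReversalAlong.isStrong_of_isDipath {p : List V} {u v : V}
    (h : ReversalAlong D D' (pathArcs p)) (hp : IsDipath D.arc p u v) (hD : IsStrong D)
    (hrob : ∀ f : V × V, D.arc f.1 f.2 → ReflTransGen (avoiding D.arc f) u v) :
    IsStrong D' := by
  obtain ⟨l, rfl⟩ := List.head?_eq_some_iff.1 hp.1
  intro x y
  by_contra hxy
  set S := {z | ReflTransGen D'.arc x z}
  have hS : ∀ a b, D'.arc a b → a ∈ S → b ∈ S := fun a b hab ha => ha.tail hab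
  have hback {a b : V} (hab : ReflTransGen (PathStep (u :: l)) a b) (hb : b ∈ S) : a ∈ S :=
    (reflTransGen_swap.2 hab).mem_of_closed
      (fun s t hst hs => hS s t ((h.2 s t).2 (Or.inr hst)) hs) hb
  have hcross {a b : V} (hab : D.arc a b) (ha : a ∈ S) (hb : b ∉ S) :
      PathStep (u :: l) a b := by
    by_contra hA
    exact hb (hS a b ((h.2 a b).2 (Or.inl ⟨hab, hA⟩)) ha)
  obtain ⟨a, b, hab, ha, hb⟩ := (hD x y).exists_step_mem_not_mem (S := S) .refl hxy
  have hf := hcross hab ha hb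
  have hu : u ∈ S := hback (reflTransGen_pathStep_head hf.mem.1) ha
  have hv : v ∉ S := fun hv => hb (hback (reflTransGen_pathStep_of_getLast? hp.2.1 hf.mem.2) hv)
  obtain ⟨a', b', ⟨hab', hne⟩, ha', hb'⟩ := (hrob (a, b) hab).exists_step_mem_not_mem hu hv
  rcases reflTransGen_pathStep_or_of_ne hf (hcross hab' ha' hb') (Ne.symm hne) with h' | h'
  · exact hb (hback h' ha')
  · exact hb' (hback h' ha)

end Reversal

section Pockets

variable {α : Type*} {R : α → α → Prop} {v₀ z z' : α} {f g : α × α}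

def pocket (R : α → α → Prop) (v₀ : α) (f : α × α) : Set α :=
  {z | ¬ ReflTransGen (avoiding R f) z v₀}

def robustSet (R : α → α → Prop) (v₀ : α) : Set α :=
  {u | ∀ f : α × α, R f.1 f.2 → ReflTransGen (avoiding R f) u v₀}

lemma self_mem_robustSet : v₀ ∈ robustSet R v₀ := fun _ _ => .refl

lemma notMem_pocket_of_mem_robustSet (hz : z ∈ robustSet R v₀) (hf : R f.1 f.2) :
    z ∉ pocket R v₀ f :=
  fun h => h (hz f hf)

lemma mem_pocket_of_rel (hz : z ∈ pocket R v₀ f) (h : R z z') (hf : (z, z') ≠ f) :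
    z' ∈ pocket R v₀ f :=
  fun h' => hz (.head ⟨h, hf⟩ h')

lemma snd_notMem_pocket (hR : ∀ z, ReflTransGen R z v₀) (f : α × α) :
    f.2 ∉ pocket R v₀ f := by
  rcases (hR f.2).avoiding_or_snd_avoiding f with h | h <;> exact fun hc => hc h

lemma pocket_subset_of_snd_mem (hf : f.2 ∈ pocket R v₀ g) :
    pocket R v₀ f ⊆ pocket R v₀ g := by
  intro z hz hzg
  rcases hzg.avoiding_or_snd_avoiding f with h | h
  · exact hz (ReflTransGen.mono (fun _ _ hst => ⟨hst.1.1, hst.2⟩) _ _ h)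
  · exact hf (ReflTransGen.mono (fun _ _ hst => hst.1) _ _ h)

/-- Take `f` with a maximal pocket containing `z`. -/
lemma exists_mem_pocket_snd_mem_robustSet [Finite α] (hR : ∀ z, ReflTransGen R z v₀)
    (hz : z ∉ robustSet R v₀) :
    ∃ f : α × α, R f.1 f.2 ∧ z ∈ pocket R v₀ f ∧ f.2 ∈ robustSet R v₀ := by
  have hne : {f : α × α | R f.1 f.2 ∧ z ∈ pocket R v₀ f}.Nonempty := by
    simp only [robustSet, Set.mem_ofPred_eq, not_forall] at hz
    obtain ⟨f, hf, hzf⟩ := hz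
    exact ⟨f, hf, hzf⟩
  obtain ⟨f, ⟨hf, hzf⟩, hmax⟩ :=
    Set.Finite.exists_maximalFor (pocket R v₀) _ (Set.toFinite _) hne
  refine ⟨f, hf, hzf, fun g hg => ?_⟩
  by_contra hfg
  have hsub := pocket_subset_of_snd_mem hfg
  exact snd_notMem_pocket hR f (hmax ⟨hg, hsub hzf⟩ hsub hfg)

/-- A walk from `z` to `v₀` uses `f` or `g`; if it reaches `f` first, it can avoid `g` up to
`f` and then continue from the robust head `f.2`. -/
lemma eq_of_mem_pocket_of_mem_pocket (hR : ∀ z, ReflTransGen R z v₀) (hf : R f.1 f.2)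
    (hg : R g.1 g.2) (hf₂ : f.2 ∈ robustSet R v₀) (hg₂ : g.2 ∈ robustSet R v₀)
    (hzf : z ∈ pocket R v₀ f) (hzg : z ∈ pocket R v₀ g) : f = g := by
  by_contra hfg
  have hav {e : α × α} (he : e ∈ ({f, g} : Set (α × α))) {a b : α}
      (h : R a b ∧ (a, b) ∉ ({f, g} : Set (α × α))) : avoiding R e a b :=
    ⟨h.1, fun hab => h.2 (hab ▸ he)⟩
  rcases (hR z).avoiding_or_exists_fst {f, g} with h | ⟨e, he, h⟩
  · exact hzf (ReflTransGen.mono (fun _ _ => hav (Set.mem_insert f _)) _ _ h)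
  · rcases he with rfl | rfl
    · exact hzg ((ReflTransGen.mono (fun _ _ => hav (Set.mem_insert_of_mem _ rfl)) _ _ h).tail
        ⟨hf, fun h' => hfg h'⟩ |>.trans (hf₂ g hg))
    · exact hzf ((ReflTransGen.mono (fun _ _ => hav (Set.mem_insert _ _)) _ _ h).tail
        ⟨hg, fun h' => hfg h'.symm⟩ |>.trans (hg₂ f hf))

lemma mem_pocket_of_rel_or_rel [Finite α] (hR : ∀ z, ReflTransGen R z v₀) (hf : R f.1 f.2)
    (hf₂ : f.2 ∈ robustSet R v₀) (hz : z ∈ pocket R v₀ f) (hz' : z' ∉ robustSet R v₀)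
    (h : R z z' ∨ R z' z) : z' ∈ pocket R v₀ f := by
  rcases h with h | h
  · exact mem_pocket_of_rel hz h fun e => hz' (by rwa [← e] at hf₂)
  · obtain ⟨g, hg, hz'g, hg₂⟩ := exists_mem_pocket_snd_mem_robustSet hR hz'
    have hzg : z ∈ pocket R v₀ g :=
      mem_pocket_of_rel hz'g h fun e =>
        notMem_pocket_of_mem_robustSet (by rwa [← e] at hg₂) hf hz
    rwa [eq_of_mem_pocket_of_mem_pocket hR hf hg hf₂ hg₂ hz hzg]

end Pockets

section Counting

variable {V : Type*} {G : SimpleGraph V} {D : GraphOrientation G}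

open Classical in
noncomputable def arcsBetween (D : GraphOrientation G) (S T : Finset V) : Finset (V × V) :=
  (S ×ˢ T).filter fun a => D.arc a.1 a.2

lemma mem_arcsBetween {S T : Finset V} {a : V × V} :
    a ∈ arcsBetween D S T ↔ a.1 ∈ S ∧ a.2 ∈ T ∧ D.arc a.1 a.2 := by
  simp [arcsBetween, and_assoc]

lemma edgesIn_eq_card_arcsBetween (D : GraphOrientation G) (U : Finset V) :
    edgesIn G U = (arcsBetween D U U).card := by
  rw [edgesIn, ← Set.ncard_coe_finset]
  symm
  refine Set.ncard_congr (fun a _ => s(a.1, a.2)) ?_ ?_ ?_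
  · rintro ⟨a, b⟩ h
    rw [Finset.mem_coe, mem_arcsBetween] at h
    refine ⟨(D.adj_iff a b).2 (Or.inl h.2.2), fun z hz => ?_⟩
    rcases Sym2.mem_iff.1 hz with rfl | rfl
    exacts [h.1, h.2.1]
  · rintro ⟨a, b⟩ ⟨a', b'⟩ h h' e
    rw [Finset.mem_coe, mem_arcsBetween] at h h'
    rcases Sym2.eq_iff.1 e with ⟨rfl, rfl⟩ | ⟨rfl, rfl⟩
    · rfl
    · exact absurd h'.2.2 (D.asymm _ _ h.2.2)
  · intro e he
    induction e using Sym2.ind with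
    | h x y =>
      obtain ⟨hxy, hU⟩ := he
      have hx : x ∈ U := hU x (Sym2.mem_mk_left x y)
      have hy : y ∈ U := hU y (Sym2.mem_mk_right x y)
      rcases (D.adj_iff x y).1 hxy with h | h
      · exact ⟨(x, y), mem_arcsBetween.2 ⟨hx, hy, h⟩, rfl⟩
      · exact ⟨(y, x), mem_arcsBetween.2 ⟨hy, hx, h⟩, Sym2.eq_swap⟩

variable [Fintype V] [DecidableEq V]

lemma sum_indeg_eq_card_add_card (U : Finset V) :
    ∑ u ∈ U, indeg D u = (arcsBetween D U U).card + (arcsBetween D Uᶜ U).card := by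
  classical
  have hcard (S : Finset V) : (arcsBetween D S U).card =
      ∑ u ∈ U, ∑ y ∈ S, if D.arc y u then 1 else 0 := by
    rw [arcsBetween, Finset.card_filter, Finset.sum_product_right]
  have hindeg (u : V) : indeg D u = ∑ y, if D.arc y u then 1 else 0 := by
    rw [indeg, Set.ncard_eq_toFinset_card', Set.toFinset_ofPred, Finset.card_filter]
  simp only [hcard, hindeg, ← Finset.sum_add_distrib, Finset.sum_add_sum_compl]

lemma fst_mem_compl_of_mem_arcsBetween {U : Finset V} {a : V × V}
    (h : a ∈ arcsBetween D Uᶜ U) : a.1 ∈ (↑U : Set V)ᶜ := by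
  simpa using (mem_arcsBetween.1 h).1

noncomputable def tailComponent (D : GraphOrientation G) (U : Finset V)
    (a : arcsBetween D Uᶜ U) :
    (G.induce (↑U : Set V)ᶜ).ConnectedComponent :=
  (G.induce _).connectedComponentMk ⟨a.1.1, fst_mem_compl_of_mem_arcsBetween a.2⟩

lemma tailComponent_surjective (hD : IsStrong D) {U : Finset V} (hU : U.Nonempty) :
    Function.Surjective (tailComponent D U) := by
  intro c
  obtain ⟨u₀, hu₀⟩ := hU
  obtain ⟨x, rfl⟩ := c.exists_rep
  let C : Set V := {z | ∃ hz : z ∈ (↑U : Set V)ᶜ,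
    (G.induce _).connectedComponentMk ⟨z, hz⟩ = (G.induce _).connectedComponentMk x}
  obtain ⟨a, b, hab, ⟨ha, hac⟩, hb⟩ :=
    (hD x u₀).exists_step_mem_not_mem (S := C) ⟨x.2, rfl⟩ fun ⟨h, _⟩ => h hu₀
  have hbU : b ∈ U := by
    by_contra hbU
    refine hb ⟨hbU, Eq.trans ?_ hac⟩
    exact SimpleGraph.ConnectedComponent.eq.2
      (SimpleGraph.Adj.reachable ((D.adj_iff a b).2 (Or.inl hab)).symm)
  exact ⟨⟨(a, b), mem_arcsBetween.2 ⟨by simpa using ha, hbU, hab⟩⟩, hac⟩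

/-- Each component of `G - W` lies in a single pocket, and the only arc from a pocket into
`W` is the pocket's own arc. -/
lemma tailComponent_injective (hD : IsStrong D) {W : Finset V} {v₀ : V}
    (hW : (↑W : Set V) = robustSet D.arc v₀) : Function.Injective (tailComponent D W) := by
  have hR (z : V) : ReflTransGen D.arc z v₀ := hD z v₀
  have hnot {z : V} (hz : z ∈ (↑W : Set V)ᶜ) : z ∉ robustSet D.arc v₀ := hW ▸ hz
  have hentry {f : V × V} (hf : D.arc f.1 f.2) {x y : V} (hx : x ∈ pocket D.arc v₀ f)
      (hy : y ∈ W) (hxy : D.arc x y) : (x, y) = f := by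
    by_contra hne
    exact notMem_pocket_of_mem_robustSet (hW ▸ hy) hf (mem_pocket_of_rel hx hxy hne)
  rintro ⟨⟨a, b⟩, hab⟩ ⟨⟨a', b'⟩, hab'⟩ h
  obtain ⟨f, hf, haf, hf₂⟩ := exists_mem_pocket_snd_mem_robustSet hR
    (hnot (fst_mem_compl_of_mem_arcsBetween hab))
  have hreach := SimpleGraph.ConnectedComponent.exact h
  rw [SimpleGraph.reachable_iff_reflTransGen] at hreach
  have ha'f : a' ∈ pocket D.arc v₀ f :=
    hreach.mem_of_closed (S := {z : ↥(↑W : Set V)ᶜ | z.1 ∈ pocket D.arc v₀ f})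
      (fun s t hst hs => mem_pocket_of_rel_or_rel hR hf hf₂ hs (hnot t.2)
        ((D.adj_iff _ _).1 hst)) haf
  rw [mem_arcsBetween] at hab hab'
  exact Subtype.ext <|
    (hentry hf haf hab.2.1 hab.2.2).trans (hentry hf ha'f hab'.2.1 hab'.2.2).symm

lemma compCount_le_card_arcsBetween (hD : IsStrong D) {U : Finset V} (hU : U.Nonempty) :
    compCount G U ≤ (arcsBetween D Uᶜ U).card := by
  rw [compCount, ← Nat.card_eq_finsetCard]
  exact Nat.card_le_card_of_surjective _ (tailComponent_surjective hD hU)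

lemma card_arcsBetween_le_compCount (hD : IsStrong D) {W : Finset V} {v₀ : V}
    (hW : (↑W : Set V) = robustSet D.arc v₀) :
    (arcsBetween D Wᶜ W).card ≤ compCount G W := by
  rw [compCount, ← Nat.card_eq_finsetCard]
  exact Nat.card_le_card_of_injective _ (tailComponent_injective hD hW)

end Counting

section Potential

variable {α : Type*} [Fintype α] {B : ℕ} {f g : α → ℕ}

lemma sum_pow_lt_of_shift [DecidableEq α] {u v : α} (hB : 2 ≤ B)
    (h : ∀ z, g z + (if z = v then 1 else 0) = f z + (if z = u then 1 else 0))
    (hlt : f u + 1 < f v) : ∑ z, B ^ g z < ∑ z, B ^ f z := by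
  have huv : u ≠ v := by rintro rfl; omega
  have hsplit (k : α → ℕ) :
      ∑ z, k z = k u + k v + ∑ z ∈ (Finset.univ.erase u).erase v, k z := by
    rw [add_assoc, Finset.add_sum_erase _ _ (Finset.mem_erase.2 ⟨huv.symm, Finset.mem_univ v⟩),
      Finset.add_sum_erase _ _ (Finset.mem_univ u)]
  have hrest : ∑ z ∈ (Finset.univ.erase u).erase v, B ^ g z =
      ∑ z ∈ (Finset.univ.erase u).erase v, B ^ f z := by
    refine Finset.sum_congr rfl fun z hz => ?_
    obtain ⟨hzv, hzu, -⟩ := Finset.mem_erase.1 hz |>.imp_right Finset.mem_erase.1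
    have := h z
    simp only [hzv, hzu, if_false] at this
    rw [show g z = f z by omega]
  have hu := h u
  have hv := h v
  simp only [huv, huv.symm, if_true, if_false] at hu hv
  obtain ⟨m, hm⟩ : ∃ m, f v = m + 1 := ⟨f v - 1, by omega⟩
  have h₁ : B ^ g u ≤ B ^ m := Nat.pow_le_pow_right (by omega) (by omega)
  have h₂ : 2 * B ^ m ≤ B ^ f v := by
    rw [hm, pow_succ, mul_comm 2]
    exact Nat.mul_le_mul_left _ hB
  have h₃ : 0 < B ^ f u := by positivity
  rw [hsplit, hsplit (B ^ f ·), hrest, show g v = m by omega]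
  omega

lemma sup_le_sup_of_sum_pow_le (hB : Fintype.card α < B) (h : ∑ z, B ^ f z ≤ ∑ z, B ^ g z) :
    Finset.univ.sup f ≤ Finset.univ.sup g := by
  refine Finset.sup_le fun x _ => ?_
  have : 0 < Fintype.card α := Fintype.card_pos_iff.2 ⟨x⟩
  have h₁ : B ^ f x ≤ ∑ z, B ^ f z :=
    Finset.single_le_sum (f := (B ^ f ·)) (fun _ _ => Nat.zero_le _) (Finset.mem_univ x)
  have h₂ : ∑ z, B ^ g z ≤ Fintype.card α * B ^ Finset.univ.sup g := by
    calc ∑ z, B ^ g z ≤ ∑ _z : α, B ^ Finset.univ.sup g :=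
          Finset.sum_le_sum fun z _ =>
            Nat.pow_le_pow_right (by omega) (Finset.le_sup (Finset.mem_univ z))
      _ = Fintype.card α * B ^ Finset.univ.sup g := by simp
  have h₃ : Fintype.card α * B ^ Finset.univ.sup g < B ^ (Finset.univ.sup g + 1) := by
    rw [pow_succ, mul_comm (B ^ _)]
    exact Nat.mul_lt_mul_of_pos_right hB (pow_pos (by omega) _)
  have h₄ : B ^ f x < B ^ (Finset.univ.sup g + 1) := by omega
  exact Nat.lt_succ_iff.1 ((Nat.pow_lt_pow_iff_right (by omega)).1 h₄)

end Potential

section Extremal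

variable {V : Type*} [Fintype V] {G : SimpleGraph V} {D : GraphOrientation G}

noncomputable def potential (D : GraphOrientation G) : ℕ :=
  ∑ v : V, (Fintype.card V + 1) ^ indeg D v

lemma exists_isStrong_potential_le (h : ∃ D : GraphOrientation G, IsStrong D) :
    ∃ D : GraphOrientation G, IsStrong D ∧
      ∀ D' : GraphOrientation G, IsStrong D' → potential D ≤ potential D' := by
  obtain ⟨D, hD, hmin⟩ := (measure (potential (G := G))).wf.has_min {D | IsStrong D} h
  exact ⟨D, hD, fun D' hD' => not_lt.1 (hmin D' hD')⟩

lemma sup_indeg_le_of_potential_le {D' : GraphOrientation G} (h : potential D ≤ potential D') :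
    Finset.univ.sup (indeg D) ≤ Finset.univ.sup (indeg D') :=
  sup_le_sup_of_sum_pow_le (Nat.lt_succ_self _) h

lemma indeg_le_of_mem_robustSet (hD : IsStrong D)
    (hmin : ∀ D' : GraphOrientation G, IsStrong D' → potential D ≤ potential D') {u v : V}
    (hu : u ∈ robustSet D.arc v) : indeg D v ≤ indeg D u + 1 := by
  classical
  by_contra! hlt
  obtain ⟨p, hp⟩ := (hD u v).exists_isDipath
  obtain ⟨D', hD'⟩ := D.exists_reversalAlong fun a ha => PathStep.rel hp.2.2.2 ha
  refine (hmin D' (hD'.isStrong_of_isDipath hp hD hu)).not_gt ?_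
  have : 0 < Fintype.card V := Fintype.card_pos_iff.2 ⟨u⟩
  exact sum_pow_lt_of_shift (by omega) (hD'.indeg_add_of_isDipath hp) hlt

lemma edgesIn_add_compCount_le (hD : IsStrong D) {U : Finset V} (hU : U.Nonempty) :
    edgesIn G U + compCount G U ≤ Finset.univ.sup (indeg D) * U.card := by
  classical
  calc edgesIn G U + compCount G U
      ≤ (arcsBetween D U U).card + (arcsBetween D Uᶜ U).card := by
        rw [edgesIn_eq_card_arcsBetween D]
        exact Nat.add_le_add_left (compCount_le_card_arcsBetween hD hU) _
    _ = ∑ u ∈ U, indeg D u := (sum_indeg_eq_card_add_card U).symm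
    _ ≤ ∑ _u ∈ U, Finset.univ.sup (indeg D) :=
        Finset.sum_le_sum fun u _ => Finset.le_sup (Finset.mem_univ u)
    _ = Finset.univ.sup (indeg D) * U.card := by
        rw [Finset.sum_const, smul_eq_mul, mul_comm]

lemma exists_lt_edgesIn_add_compCount [Nonempty V] (hD : IsStrong D)
    (hmin : ∀ D' : GraphOrientation G, IsStrong D' → potential D ≤ potential D') :
    ∃ W : Finset V, W.Nonempty ∧
      Finset.univ.sup (indeg D) * W.card < edgesIn G W + compCount G W + W.card := by
  classical
  obtain ⟨v, -, hv⟩ := Finset.exists_mem_eq_sup Finset.univ Finset.univ_nonempty (indeg D)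
  set W := Finset.univ.filter (· ∈ robustSet D.arc v)
  have hW : (↑W : Set V) = robustSet D.arc v := by ext; simp [W]
  have hvW : v ∈ W := by simp [W, self_mem_robustSet]
  refine ⟨W, ⟨v, hvW⟩, ?_⟩
  have hsum : ∑ _u ∈ W, Finset.univ.sup (indeg D) < ∑ u ∈ W, (indeg D u + 1) :=
    Finset.sum_lt_sum
      (fun u hu => by
        have := indeg_le_of_mem_robustSet hD hmin (u := u) (by simpa [W] using hu); omega)
      ⟨v, hvW, by omega⟩
  simp only [Finset.sum_const, smul_eq_mul, Finset.sum_add_distrib, mul_one,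
    sum_indeg_eq_card_add_card, ← edgesIn_eq_card_arcsBetween D] at hsum
  have := card_arcsBetween_le_compCount hD hW
  rw [mul_comm] at hsum
  omega

end Extremal

lemma Nat.ceil_div_le_iff {K : Type*} [Field K] [LinearOrder K] [IsStrictOrderedRing K]
    [FloorSemiring K] {a b k : ℕ} (hb : 0 < b) : ⌈(a : K) / b⌉₊ ≤ k ↔ a ≤ k * b := by
  rw [Nat.ceil_le, div_le_iff₀ (by exact_mod_cast hb)]
  exact_mod_cast Iff.rfl

lemma Nat.le_ceil_div_of_lt {K : Type*} [Field K] [LinearOrder K] [IsStrictOrderedRing K]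
    [FloorSemiring K] {a b k : ℕ} (hb : 0 < b) (h : k * b < a + b) :
    k ≤ ⌈(a : K) / b⌉₊ := by
  by_contra! hk
  obtain ⟨j, rfl⟩ : ∃ j, k = j + 1 := ⟨k - 1, by omega⟩
  have := (Nat.ceil_div_le_iff (K := K) hb).1 (Nat.lt_succ_iff.1 hk)
  rw [add_mul, one_mul] at h
  omega

/-- If `G` admits a strongly connected orientation, then it admits one whose maximum
indegree equals `max_{∅ ≠ U ⊆ V} ⌈(m(U) + c(U)) / |U|⌉`, and this orientation attains
the minimum of the maximum indegree over all strongly connected orientations. -/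
theorem stmt_13 {V : Type*} [Fintype V] (G : SimpleGraph V)
    (hex : ∃ D : GraphOrientation G, ∀ u v : V, Relation.ReflTransGen D.arc u v) :
    ∃ D : GraphOrientation G, (∀ u v : V, Relation.ReflTransGen D.arc u v) ∧
      Finset.univ.sup (indeg D) =
        (⨆ U : {U : Finset V // U.Nonempty},
          ⌈((edgesIn G U.1 + compCount G U.1 : ℚ)) / (U.1.card : ℚ)⌉₊) ∧
      ∀ D' : GraphOrientation G, (∀ u v : V, Relation.ReflTransGen D'.arc u v) →
        Finset.univ.sup (indeg D) ≤ Finset.univ.sup (indeg D') := by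
  obtain ⟨D, hD, hmin⟩ := exists_isStrong_potential_le hex
  refine ⟨D, hD, le_antisymm ?_ ?_, fun D' hD' => sup_indeg_le_of_potential_le (hmin D' hD')⟩
  · rcases isEmpty_or_nonempty V with hV | hV
    · simp [Finset.univ_eq_empty]
    obtain ⟨W, hW, hlt⟩ := exists_lt_edgesIn_add_compCount hD hmin
    exact le_ciSup_of_le (Set.finite_range _).bddAbove ⟨W, hW⟩
      (by exact_mod_cast Nat.le_ceil_div_of_lt (K := ℚ) hW.card_pos hlt)
  · refine ciSup_le' fun U => ?_
    exact_mod_cast (Nat.ceil_div_le_iff U.2.card_pos).2 (edgesIn_add_compCount_le hD U.2)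
end

section
/- Let G = (V, E) be a finite undirected graph, let D be an acyclic orientation of G, and let U be a nonempty subset of V. Then some vertex of D has indegree at least the minimum degree of the induced subgraph G[U]; in particular, the maximum indegree of any acyclic orientation of G is at least max over nonempty U ⊆ V of the minimum degree of G[U]. -/
lemma key_14 {V : Type*} [Fintype V] {G : SimpleGraph V} [DecidableRel G.Adj]
    (D : GraphOrientation G) (hacyc : ∀ w : V, ¬ Relation.TransGen D.arc w w)
    (U : Finset V) (hU : U.Nonempty) :
    ∃ w : V, U.inf' hU (fun x => (U.filter (fun y => G.Adj x y)).card) ≤ indeg D w := by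
  haveI : IsTrans V (fun a b => Relation.TransGen D.arc b a) :=
    ⟨fun a b c h1 h2 => h2.trans h1⟩
  haveI : IsIrrefl V (fun a b => Relation.TransGen D.arc b a) := ⟨fun a => hacyc a⟩
  have hwf : WellFounded (fun a b => Relation.TransGen D.arc b a) :=
    Finite.wellFounded_of_trans_of_irrefl _
  obtain ⟨v, hvU, hmax⟩ := hwf.has_min ↑U (by exact_mod_cast hU)
  have hsub : ↑(U.filter (fun y => G.Adj v y)) ⊆ {u | D.arc u v} := by
    intro y hy
    simp only [Finset.coe_filter, Set.mem_setOf_eq] at hy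
    rcases (D.adj_iff v y).1 hy.2 with h | h
    · exact absurd (Relation.TransGen.single h) (hmax y hy.1)
    · exact h
  refine ⟨v, le_trans (Finset.inf'_le _ hvU) ?_⟩
  calc (U.filter (fun y => G.Adj v y)).card
      = (↑(U.filter (fun y => G.Adj v y)) : Set V).ncard := (Set.ncard_coe_finset _).symm
    _ ≤ ({u | D.arc u v} : Set V).ncard := Set.ncard_le_ncard hsub (Set.toFinite _)

/-- In any acyclic orientation, some vertex has indegree at least the minimum degree of
the induced subgraph `G[U]`, for every nonempty `U ⊆ V`; in particular the maximum
indegree is at least `max_{∅ ≠ W ⊆ V}` of the minimum degree of `G[W]`. -/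
theorem stmt_14 {V : Type*} [Fintype V] (G : SimpleGraph V) [DecidableRel G.Adj]
    (D : GraphOrientation G) (hacyc : ∀ w : V, ¬ Relation.TransGen D.arc w w)
    (U : Finset V) (hU : U.Nonempty) :
    (∃ w : V, U.inf' hU (fun x => (U.filter (fun y => G.Adj x y)).card) ≤ indeg D w) ∧
    (⨆ W : {W : Finset V // W.Nonempty},
        W.1.inf' W.2 (fun x => (W.1.filter (fun y => G.Adj x y)).card))
      ≤ Finset.univ.sup (indeg D) := by
  constructor
  · exact key_14 D hacyc U hU
  · haveI : Nonempty {W : Finset V // W.Nonempty} := ⟨⟨U, hU⟩⟩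
    refine ciSup_le fun W => ?_
    obtain ⟨w, hw⟩ := key_14 D hacyc W.1 W.2
    exact hw.trans (Finset.le_sup (Finset.mem_univ w))
end

section
/- Let G = (V, E) be a finite undirected graph with V nonempty. Then the minimum, over all acyclic orientations D of G, of the maximum indegree of D equals the maximum, over all nonempty subsets U ⊆ V, of the minimum degree of the induced subgraph G[U]. In particular, there exists an acyclic orientation of G whose maximum indegree equals this quantity (such an orientation is produced by repeatedly choosing a vertex of minimum degree, orienting all its remaining incident edges into it, and deleting it). -/
open Finset

section Aux
variable {V : Type*} [Fintype V]

theorem exists_sink {G : SimpleGraph V} (D : GraphOrientation G)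
    (hacyc : ∀ w : V, ¬ Relation.TransGen D.arc w w) :
    ∀ (W : Finset V), W.Nonempty → ∃ v ∈ W, ∀ u ∈ W, ¬ D.arc v u := by
  classical
  intro W
  induction W using Finset.strongInduction with
  | _ W ih =>
    intro hW
    obtain ⟨x, hx⟩ := hW
    by_cases hok : ∀ u ∈ W, ¬ D.arc x u
    · exact ⟨x, hx, hok⟩
    · push_neg at hok
      obtain ⟨u, hu, hxu⟩ := hok
      set W' := W.filter (fun w => Relation.TransGen D.arc x w) with hW'
      have hxnot : x ∉ W' := by
        simp only [hW', Finset.mem_filter, not_and]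
        intro _
        exact hacyc x
      have hss : W' ⊂ W :=
        Finset.ssubset_iff_of_subset (Finset.filter_subset _ _) |>.mpr ⟨x, hx, hxnot⟩
      have hne : W'.Nonempty :=
        ⟨u, Finset.mem_filter.mpr ⟨hu, Relation.TransGen.single hxu⟩⟩
      obtain ⟨v, hv, hvmin⟩ := ih W' hss hne
      refine ⟨v, Finset.filter_subset _ _ hv, fun w hw hvw => ?_⟩
      have : Relation.TransGen D.arc x w := ((Finset.mem_filter.mp hv).2).tail hvw
      exact hvmin w (Finset.mem_filter.mpr ⟨hw, this⟩) hvw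

variable [Nonempty V] [DecidableEq V] (G : SimpleGraph V) [DecidableRel G.Adj]

noncomputable def pickV (S : Finset V) : V :=
  if h : S.Nonempty then
    (Finset.exists_min_image S (fun x => (S.filter (fun y => G.Adj x y)).card) h).choose
  else Classical.arbitrary V

theorem pickV_spec {S : Finset V} (h : S.Nonempty) :
    pickV G S ∈ S ∧ ∀ u ∈ S,
      (S.filter (fun y => G.Adj (pickV G S) y)).card ≤ (S.filter (fun y => G.Adj u y)).card := by
  rw [pickV, dif_pos h]
  exact (Finset.exists_min_image S _ h).choose_spec

noncomputable def seqS : ℕ → Finset V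
  | 0 => Finset.univ
  | n+1 => (seqS n).erase (pickV G (seqS n))

theorem seqS_subset {m n : ℕ} (h : m ≤ n) : seqS G n ⊆ seqS G m := by
  induction n, h using Nat.le_induction with
  | base => exact subset_rfl
  | succ n hmn ih => exact (Finset.erase_subset _ _).trans ih

theorem seqS_card (n : ℕ) : (seqS G n).card ≤ Fintype.card V - n := by
  induction n with
  | zero => simp [seqS]
  | succ n ih =>
    by_cases h : (seqS G n).Nonempty
    · have : (seqS G (n+1)).card = (seqS G n).card - 1 := by
        rw [seqS, Finset.card_erase_of_mem (pickV_spec G h).1]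
      omega
    · rw [Finset.not_nonempty_iff_eq_empty] at h
      simp [seqS, h]

theorem seqS_ex (v : V) : ∃ n, v ∉ seqS G (n + 1) := by
  refine ⟨Fintype.card V, fun hmem => ?_⟩
  have h1 : v ∈ seqS G (Fintype.card V) := seqS_subset G (Nat.le_succ _) hmem
  have := seqS_card G (Fintype.card V)
  have := Finset.card_pos.mpr ⟨v, h1⟩
  omega

noncomputable def rankV (v : V) : ℕ := Nat.find (p := fun n => v ∉ seqS G (n+1)) (seqS_ex G v)

theorem rankV_notmem (v : V) : v ∉ seqS G (rankV G v + 1) :=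
  Nat.find_spec (seqS_ex G v)

theorem rankV_mem (v : V) : v ∈ seqS G (rankV G v) := by
  rcases h : rankV G v with _ | n
  · simp [seqS]
  · have := Nat.find_min (p := fun n => v ∉ seqS G (n+1)) (seqS_ex G v)
      (show n < rankV G v by omega)
    simpa using this

theorem rankV_pick (v : V) : pickV G (seqS G (rankV G v)) = v := by
  have h1 := rankV_notmem G v
  have h2 := rankV_mem G v
  simp only [seqS] at h1
  by_contra hne
  exact h1 (Finset.mem_erase.mpr ⟨fun h => hne h.symm, h2⟩)

theorem rankV_le_iff {u v : V} : rankV G v ≤ rankV G u ↔ u ∈ seqS G (rankV G v) := by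
  constructor
  · intro h
    exact seqS_subset G h (rankV_mem G u)
  · intro h
    by_contra hlt
    push_neg at hlt
    exact rankV_notmem G u (seqS_subset G (by omega) h)

theorem rankV_inj {u v : V} (h : rankV G u = rankV G v) : u = v := by
  have := rankV_pick G u
  rw [h, rankV_pick G v] at this
  exact this.symm

noncomputable def Dmin : GraphOrientation G where
  arc u v := G.Adj u v ∧ rankV G v < rankV G u
  adj_iff u v := by
    constructor
    · intro h
      have hne : rankV G u ≠ rankV G v := fun he => h.ne (rankV_inj G he)
      rcases lt_or_gt_of_ne hne with h1 | h1
      · exact Or.inr ⟨h.symm, h1⟩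
      · exact Or.inl ⟨h, h1⟩
    · rintro (⟨h, _⟩ | ⟨h, _⟩)
      · exact h
      · exact h.symm
  asymm u v h h' := lt_asymm h.2 h'.2

theorem indeg_Dmin (v : V) :
    indeg (Dmin G) v = ((seqS G (rankV G v)).filter (fun y => G.Adj v y)).card := by
  rw [indeg]
  have : {u | (Dmin G).arc u v} = ↑((seqS G (rankV G v)).filter (fun y => G.Adj v y)) := by
    ext u
    simp only [Set.mem_setOf_eq, Finset.coe_filter, Set.mem_setOf_eq, Dmin]
    constructor
    · intro ⟨hadj, hlt⟩
      exact ⟨(rankV_le_iff G).mp hlt.le, hadj.symm⟩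
    · intro ⟨hmem, hadj⟩
      have hle := (rankV_le_iff G).mpr hmem
      have : rankV G v ≠ rankV G u := fun he => hadj.ne (rankV_inj G he)
      exact ⟨hadj.symm, by omega⟩
  rw [this, Set.ncard_coe_finset]

end Aux

/-- The minimum over all acyclic orientations of the maximum indegree equals the
maximum over all nonempty `U ⊆ V` of the minimum degree of `G[U]`: some acyclic
orientation attains this value, and it minimizes the maximum indegree among all
acyclic orientations. -/
theorem stmt_15 {V : Type*} [Fintype V] [Nonempty V] (G : SimpleGraph V)
    [DecidableRel G.Adj] :
    ∃ D : GraphOrientation G, (∀ w : V, ¬ Relation.TransGen D.arc w w) ∧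
      Finset.univ.sup (indeg D) =
        (⨆ W : {W : Finset V // W.Nonempty},
          W.1.inf' W.2 (fun x => (W.1.filter (fun y => G.Adj x y)).card)) ∧
      ∀ D' : GraphOrientation G, (∀ w : V, ¬ Relation.TransGen D'.arc w w) →
        Finset.univ.sup (indeg D) ≤ Finset.univ.sup (indeg D') := by
  classical
  haveI : Nonempty {W : Finset V // W.Nonempty} := ⟨⟨Finset.univ, Finset.univ_nonempty⟩⟩
  set d := (⨆ W : {W : Finset V // W.Nonempty},
      W.1.inf' W.2 (fun x => (W.1.filter (fun y => G.Adj x y)).card)) with hd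
  have low : ∀ (D' : GraphOrientation G), (∀ w : V, ¬ Relation.TransGen D'.arc w w) →
      d ≤ Finset.univ.sup (indeg D') := by
    intro D' hacyc
    rw [hd]
    apply ciSup_le
    rintro ⟨W, hW⟩
    obtain ⟨v, hv, hsink⟩ := exists_sink D' hacyc W hW
    have h1 : W.inf' hW (fun x => (W.filter (fun y => G.Adj x y)).card)
        ≤ (W.filter (fun y => G.Adj v y)).card := Finset.inf'_le _ hv
    have h2 : (W.filter (fun y => G.Adj v y)).card ≤ indeg D' v := by
      rw [indeg, ← Set.ncard_coe_finset]
      apply Set.ncard_le_ncard _ (Set.toFinite _)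
      intro u hu
      simp only [Finset.coe_filter, Set.mem_setOf_eq] at hu ⊢
      rcases (D'.adj_iff v u).mp hu.2 with h | h
      · exact absurd h (hsink u hu.1)
      · exact h
    exact h1.trans (h2.trans (Finset.le_sup (Finset.mem_univ v)))
  have hacyc : ∀ w : V, ¬ Relation.TransGen (Dmin G).arc w w := by
    intro w hw
    have key : ∀ a b : V, Relation.TransGen (Dmin G).arc a b → rankV G b < rankV G a := by
      intro a b h
      induction h with
      | single h => exact h.2
      | tail _ h2 ih => exact lt_trans h2.2 ih
    exact lt_irrefl _ (key w w hw)
  have hup : Finset.univ.sup (indeg (Dmin G)) ≤ d := by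
    apply Finset.sup_le
    intro v _
    rw [indeg_Dmin]
    have hne : (seqS G (rankV G v)).Nonempty := ⟨v, rankV_mem G v⟩
    have hle : ((seqS G (rankV G v)).filter (fun y => G.Adj v y)).card ≤
        (seqS G (rankV G v)).inf' hne
          (fun x => ((seqS G (rankV G v)).filter (fun y => G.Adj x y)).card) := by
      apply Finset.le_inf'
      intro u hu
      have := (pickV_spec G hne).2 u hu
      rwa [rankV_pick G v] at this
    refine hle.trans ?_
    rw [hd]
    exact le_ciSup
      (f := fun W : {W : Finset V // W.Nonempty} =>
        W.1.inf' W.2 (fun x => (W.1.filter (fun y => G.Adj x y)).card))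
      (Set.Finite.bddAbove (Set.finite_range _))
      (⟨seqS G (rankV G v), hne⟩ : {W : Finset V // W.Nonempty})
  have heq : Finset.univ.sup (indeg (Dmin G)) = d := le_antisymm hup (low (Dmin G) hacyc)
  exact ⟨Dmin G, hacyc, heq, fun D' h => heq ▸ low D' h⟩
end
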